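/- For A_1, …, A_m ∈ P_n, λ(exp((1/m) ∑_{j=1}^m log A_j)) ≺_log the entrywise geometric mean of the eigenvalue vectors: for every k = 1, …, n, ∏_{i=1}^k λ_i(exp((1/m) ∑_{j=1}^m log A_j)) ≤ ∏_{i=1}^k ∏_{j=1}^m λ_i(A_j)^{1/m}, with equality for k = n. -/

import Mathlib

open Matrix BigOperators

noncomputable section

/-- Loewner order: `A ≤ B` iff `B - A` is positive semidefinite. -/
def loewnerLE {m : ℕ} (A B : Matrix (Fin m) (Fin m) ℝ) : Prop := (B - A).PosSemidef

/-- `M(B/A) = inf {α > 0 : B ≤ α A}` (Loewner order). -/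
noncomputable def Mratio {m : ℕ} (A B : Matrix (Fin m) (Fin m) ℝ) : ℝ :=
  sInf {α : ℝ | 0 < α ∧ loewnerLE B (α • A)}

/-- The Thompson metric `d_T(A,B) = max (log M(B/A)) (log M(A/B))`. -/
noncomputable def thompson {m : ℕ} (A B : Matrix (Fin m) (Fin m) ℝ) : ℝ :=
  max (Real.log (Mratio A B)) (Real.log (Mratio B A))

/-- Eigenvalues of a (Hermitian) matrix arranged in decreasing order, counting
multiplicities; junk value `0` if the matrix is not Hermitian. -/
noncomputable def sortedEigs {m : ℕ} (A : Matrix (Fin m) (Fin m) ℝ) : Fin m → ℝ :=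
  if hA : A.IsHermitian then fun i => hA.eigenvalues (Tuple.sort hA.eigenvalues i.rev)
  else fun _ => 0

/-- Functional calculus: apply `f : ℝ → ℝ` to a symmetric matrix via the spectral
decomposition; junk value `0` if the matrix is not Hermitian. -/
noncomputable def matFun {m : ℕ} (f : ℝ → ℝ) (A : Matrix (Fin m) (Fin m) ℝ) :
    Matrix (Fin m) (Fin m) ℝ :=
  if hA : A.IsHermitian then hA.cfc f else 0

/-- Matrix logarithm via the spectral decomposition. -/
noncomputable def matLog {m : ℕ} (A : Matrix (Fin m) (Fin m) ℝ) : Matrix (Fin m) (Fin m) ℝ :=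
  matFun Real.log A

/-- Matrix exponential via the spectral decomposition. -/
noncomputable def matExp {m : ℕ} (A : Matrix (Fin m) (Fin m) ℝ) : Matrix (Fin m) (Fin m) ℝ :=
  matFun Real.exp A

/-- Positive-definite square root. -/
noncomputable def pdSqrt {m : ℕ} (A : Matrix (Fin m) (Fin m) ℝ) : Matrix (Fin m) (Fin m) ℝ :=
  matFun Real.sqrt A

/-- The inverse square root `A^{-1/2}`. -/
noncomputable def pdInvSqrt {m : ℕ} (A : Matrix (Fin m) (Fin m) ℝ) : Matrix (Fin m) (Fin m) ℝ :=
  matFun (fun x => (Real.sqrt x)⁻¹) A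

/-- The real power `A^r` of a positive definite matrix via the spectral decomposition. -/
noncomputable def matPow {m : ℕ} (r : ℝ) (A : Matrix (Fin m) (Fin m) ℝ) :
    Matrix (Fin m) (Fin m) ℝ :=
  matFun (fun x => x ^ r) A

/-- Frobenius norm `(tr X²)^{1/2}` of a real symmetric matrix. -/
noncomputable def frob {m : ℕ} (X : Matrix (Fin m) (Fin m) ℝ) : ℝ :=
  Real.sqrt ((X * X).trace)

/-- Riemannian trace distance `δ(A,B) = ‖log (A^{-1/2} B A^{-1/2})‖_F`. -/
noncomputable def riemDist {m : ℕ} (A B : Matrix (Fin m) (Fin m) ℝ) : ℝ :=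
  frob (matLog (pdInvSqrt A * B * pdInvSqrt A))

/-- The standard symplectic form matrix `J = [[0, I], [-I, 0]]` of size `(n+n) × (n+n)`. -/
noncomputable def Jmat (n : ℕ) : Matrix (Fin (n + n)) (Fin (n + n)) ℝ :=
  Matrix.reindex finSumFinEquiv finSumFinEquiv (Matrix.fromBlocks 0 1 (-1) 0)

/-- The matrix `A^{1/2} Jᵀ A J A^{1/2}`, whose eigenvalues are the squares of the
(extended) symplectic eigenvalues of `A`. -/
noncomputable def sympProd {n : ℕ} (A : Matrix (Fin (n + n)) (Fin (n + n)) ℝ) :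
    Matrix (Fin (n + n)) (Fin (n + n)) ℝ :=
  pdSqrt A * (Jmat n)ᵀ * A * Jmat n * pdSqrt A

/-- The `t`-weighted geometric mean `A #_t B = A^{1/2} (A^{-1/2} B A^{-1/2})^t A^{1/2}`. -/
noncomputable def gmean {m : ℕ} (t : ℝ) (A B : Matrix (Fin m) (Fin m) ℝ) :
    Matrix (Fin m) (Fin m) ℝ :=
  pdSqrt A * matPow t (pdInvSqrt A * B * pdInvSqrt A) * pdSqrt A

/-! Eigenvalues of `exp` and `log` of a matrix are those of the matrix moved by the monotone map,
in the same order, so after taking logarithms the claim is Ky Fan's inequality for the Hermitian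
matrices `log A_j`: the sum of the `k` largest eigenvalues of a Hermitian `M` is the maximum of
`tr (M P)` over `0 ≤ P ≤ 1` with `tr P = k`, attained at the spectral projection of `M` onto its
top `k` eigenvectors; hence it is subadditive and positively homogeneous. For `k = n` both sides
are traces. -/

theorem Antitone.eq_of_map_univ_eq {α : Type*} [LinearOrder α] {N : ℕ} {u v : Fin N → α}
    (hu : Antitone u) (hv : Antitone v)
    (h : Finset.univ.val.map u = Finset.univ.val.map v) : u = v := by
  have hsort : ∀ w : Fin N → α, Antitone w →
      (Finset.univ.val.map w).sort (· ≥ ·) = List.ofFn w := fun w hw => by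
    simp_rw [Fin.univ_val_map, Multiset.coe_sort]
    exact List.mergeSort_of_pairwise (by simpa using hw.sortedGE_ofFn.pairwise)
  exact List.ofFn_injective ((hsort u hu).symm.trans (h ▸ hsort v hv))

theorem Antitone.sum_mul_le_sum_filter_lt {N k : ℕ} (hk : k ≤ N) {w d : Fin N → ℝ}
    (hw : Antitone w) (hd0 : ∀ i, 0 ≤ d i) (hd1 : ∀ i, d i ≤ 1) (hd : ∑ i, d i = k) :
    ∑ i, w i * d i ≤ ∑ i ∈ Finset.univ.filter (fun i : Fin N => i.val < k), w i := by
  obtain ⟨t, ht⟩ : ∃ t, ∀ i : Fin N, (i.val < k → t ≤ w i) ∧ (k ≤ i.val → w i ≤ t) := by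
    by_cases hkN : k < N
    · exact ⟨w ⟨k, hkN⟩, fun i => ⟨fun hi => hw (Fin.mk_le_of_le_val hi.le), fun hi => hw hi⟩⟩
    · obtain ⟨t, ht⟩ := (Set.finite_range w).bddBelow
      exact ⟨t, fun i => ⟨fun _ => ht ⟨i, rfl⟩, fun hi => absurd i.isLt (by omega)⟩⟩
  set e : Fin N → ℝ := fun i => if i.val < k then 1 else 0
  have he : ∑ i, e i = k := by
    simp [e, Finset.sum_boole, Fin.card_filter_val_lt, hk]
  -- Termwise, `w i - t` and `e i - d i` have the same sign.
  have hsign : 0 ≤ ∑ i, (w i - t) * (e i - d i) := by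
    refine Finset.sum_nonneg fun i _ => ?_
    by_cases hi : i.val < k
    · simp only [e, if_pos hi]
      exact mul_nonneg (sub_nonneg.mpr ((ht i).1 hi)) (sub_nonneg.mpr (hd1 i))
    · simp only [e, if_neg hi, zero_sub]
      exact mul_nonneg_of_nonpos_of_nonpos (sub_nonpos.mpr ((ht i).2 (not_lt.mp hi)))
        (neg_nonpos.mpr (hd0 i))
  have hfilter :
      ∑ i ∈ Finset.univ.filter (fun i : Fin N => i.val < k), w i = ∑ i, w i * e i := by
    simp [e, Finset.sum_filter]
  simp only [mul_sub, sub_mul, Finset.sum_sub_distrib, ← Finset.mul_sum, he, hd] at hsign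
  linarith

namespace Matrix.IsHermitian

open Polynomial

variable {N : ℕ} {M : Matrix (Fin N) (Fin N) ℝ}

theorem exists_perm_sortedEigs (hM : M.IsHermitian) :
    ∃ σ : Equiv.Perm (Fin N), sortedEigs M = hM.eigenvalues ∘ σ :=
  ⟨Fin.revPerm.trans (Tuple.sort hM.eigenvalues), dif_pos hM⟩

theorem antitone_sortedEigs (hM : M.IsHermitian) : Antitone (sortedEigs M) := by
  rw [sortedEigs, dif_pos hM]
  exact fun i j hij => Tuple.monotone_sort hM.eigenvalues (Fin.rev_le_rev.mpr hij)

theorem charpoly_eq_prod_sortedEigs (hM : M.IsHermitian) :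
    M.charpoly = ∏ i, (X - C (sortedEigs M i)) := by
  obtain ⟨σ, hσ⟩ := hM.exists_perm_sortedEigs
  rw [hM.charpoly_eq, hσ, ← Equiv.prod_comp σ]
  rfl

theorem trace_eq_sum_sortedEigs (hM : M.IsHermitian) : M.trace = ∑ i, sortedEigs M i := by
  obtain ⟨σ, hσ⟩ := hM.exists_perm_sortedEigs
  rw [hM.trace_eq_sum_eigenvalues, hσ, ← Equiv.sum_comp σ]
  rfl

theorem exists_unitary_sortedEigs (hM : M.IsHermitian) :
    ∃ U ∈ unitary (Matrix (Fin N) (Fin N) ℝ), M = U * diagonal (sortedEigs M) * star U := by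
  obtain ⟨σ, hσ⟩ := hM.exists_perm_sortedEigs
  set V := (hM.eigenvectorUnitary : Matrix (Fin N) (Fin N) ℝ)
  have hstar : star (V.submatrix id σ) = (star V).submatrix σ id := conjTranspose_submatrix ..
  refine ⟨V.submatrix id σ, ?_, ?_⟩
  · rw [Matrix.mem_unitaryGroup_iff, hstar, submatrix_mul_equiv, submatrix_id_id,
      Unitary.mul_star_self_of_mem hM.eigenvectorUnitary.2]
  · rw [hstar, hσ, ← submatrix_diagonal_equiv, submatrix_mul_equiv, submatrix_mul_equiv,
      submatrix_id_id]
    simpa using hM.spectral_theorem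

theorem sortedEigs_eq_of_charpoly_eq (hM : M.IsHermitian) {v : Fin N → ℝ} (hv : Antitone v)
    (h : M.charpoly = ∏ i, (X - C (v i))) : sortedEigs M = v := by
  refine hM.antitone_sortedEigs.eq_of_map_univ_eq hv ?_
  have hroots := congrArg roots (hM.charpoly_eq_prod_sortedEigs.symm.trans h)
  simpa [roots_prod, Finset.prod_ne_zero_iff, X_sub_C_ne_zero] using hroots

theorem sortedEigs_cfc (hM : M.IsHermitian) {f : ℝ → ℝ}
    (hf : MonotoneOn f (Set.range (sortedEigs M))) :
    sortedEigs (cfc f M) = f ∘ sortedEigs M := by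
  refine (cfc_predicate f M).isHermitian.sortedEigs_eq_of_charpoly_eq
    (fun i j hij => hf ⟨j, rfl⟩ ⟨i, rfl⟩ (hM.antitone_sortedEigs hij)) ?_
  obtain ⟨σ, hσ⟩ := hM.exists_perm_sortedEigs
  rw [hM.charpoly_cfc_eq, hσ, ← Equiv.prod_comp σ]
  rfl

theorem trace_mul_le_sum_sortedEigs {B P : Matrix (Fin N) (Fin N) ℝ} (hB : B.IsHermitian)
    (hP : P.PosSemidef) (hP1 : (1 - P).PosSemidef) {k : ℕ} (hk : k ≤ N) (htr : P.trace = k) :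
    (B * P).trace ≤ ∑ i ∈ Finset.univ.filter (fun i : Fin N => i.val < k), sortedEigs B i := by
  obtain ⟨U, hU, hBU⟩ := hB.exists_unitary_sortedEigs
  set Q := star U * P * U
  have hQ : Q.PosSemidef := hP.conjTranspose_mul_mul_same U
  have hQ1 : (1 - Q).PosSemidef := by
    have h1Q : 1 - Q = star U * (1 - P) * U := by
      rw [Matrix.mul_sub, Matrix.sub_mul, Matrix.mul_one, Unitary.star_mul_self_of_mem hU]
    rw [h1Q]
    exact hP1.conjTranspose_mul_mul_same U
  have htrQ : Q.trace = k := by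
    rw [← htr, trace_mul_cycle, Unitary.mul_star_self_of_mem hU, Matrix.one_mul]
  have hBP : (B * P).trace = ∑ i, sortedEigs B i * Q i i := by
    calc (B * P).trace = (diagonal (sortedEigs B) * Q).trace := by
          conv_lhs => rw [hBU]
          rw [Matrix.mul_assoc, Matrix.mul_assoc, trace_mul_comm]
          simp only [Q, Matrix.mul_assoc]
      _ = ∑ i, sortedEigs B i * Q i i := by simp [trace, diagonal_mul]
  rw [hBP]
  refine hB.antitone_sortedEigs.sum_mul_le_sum_filter_lt hk (fun i => hQ.diag_nonneg)
    (fun i => ?_) htrQ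
  simpa using hQ1.diag_nonneg (i := i)

theorem exists_trace_mul_eq_sum_sortedEigs (hM : M.IsHermitian) {k : ℕ} (hk : k ≤ N) :
    ∃ P : Matrix (Fin N) (Fin N) ℝ, P.PosSemidef ∧ (1 - P).PosSemidef ∧ P.trace = k ∧
      (M * P).trace = ∑ i ∈ Finset.univ.filter (fun i : Fin N => i.val < k), sortedEigs M i := by
  obtain ⟨U, hU, hMU⟩ := hM.exists_unitary_sortedEigs
  set e : Fin N → ℝ := fun i => if i.val < k then 1 else 0
  have hconj : ∀ d : Fin N → ℝ, (0 ≤ d) → (U * diagonal d * star U).PosSemidef := fun d hd =>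
    (PosSemidef.diagonal hd).mul_mul_conjTranspose_same U
  have htr : ∀ A : Matrix (Fin N) (Fin N) ℝ, (U * A * star U).trace = A.trace := fun A => by
    rw [trace_mul_cycle, Unitary.star_mul_self_of_mem hU, Matrix.one_mul]
  refine ⟨U * diagonal e * star U, hconj e fun i => by positivity, ?_, ?_, ?_⟩
  · have h1 : (1 : Matrix (Fin N) (Fin N) ℝ) - U * diagonal e * star U
        = U * diagonal (1 - e) * star U := by
      rw [show diagonal (1 - e) = diagonal 1 - diagonal e from (diagonal_sub 1 e).symm,
        diagonal_one', Matrix.mul_sub, Matrix.sub_mul, Matrix.mul_one,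
        Unitary.mul_star_self_of_mem hU]
    rw [h1]
    exact hconj _ fun i => by simp only [e, Pi.sub_apply]; split_ifs <;> norm_num
  · simp [htr, e, Finset.sum_boole, Fin.card_filter_val_lt, hk]
  · have hMP : M * (U * diagonal e * star U)
        = U * (diagonal (sortedEigs M) * diagonal e) * star U := by
      conv_lhs => rw [hMU]
      simp only [Matrix.mul_assoc, ← Matrix.mul_assoc (star U) U, Unitary.star_mul_self_of_mem hU,
        Matrix.one_mul]
    simp [hMP, htr, diagonal_mul_diagonal, e, Finset.sum_filter]

theorem sum_filter_lt_sortedEigs_sum_smul_le {ι : Type*} (s : Finset ι) {c : ι → ℝ}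
    (hc : ∀ j ∈ s, 0 ≤ c j) {B : ι → Matrix (Fin N) (Fin N) ℝ}
    (hB : ∀ j ∈ s, (B j).IsHermitian) {k : ℕ} (hk : k ≤ N) :
    ∑ i ∈ Finset.univ.filter (fun i : Fin N => i.val < k), sortedEigs (∑ j ∈ s, c j • B j) i
      ≤ ∑ j ∈ s, c j * ∑ i ∈ Finset.univ.filter (fun i : Fin N => i.val < k),
        sortedEigs (B j) i := by
  have hM : (∑ j ∈ s, c j • B j).IsHermitian :=
    isSelfAdjoint_sum s fun j hj => (hB j hj).smul (IsSelfAdjoint.all (c j))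
  obtain ⟨P, hP, hP1, htr, hMP⟩ := hM.exists_trace_mul_eq_sum_sortedEigs hk
  rw [← hMP, Finset.sum_mul, trace_sum]
  refine Finset.sum_le_sum fun j hj => ?_
  rw [smul_mul_assoc, trace_smul, smul_eq_mul]
  exact mul_le_mul_of_nonneg_left ((hB j hj).trace_mul_le_sum_sortedEigs hP hP1 hk htr)
    (hc j hj)

end Matrix.IsHermitian

section

variable {N : ℕ}

theorem matFun_eq_cfc {A : Matrix (Fin N) (Fin N) ℝ} (hA : A.IsHermitian) (f : ℝ → ℝ) :
    matFun f A = cfc f A := by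
  rw [matFun, dif_pos hA, hA.cfc_eq]

theorem isHermitian_matFun (f : ℝ → ℝ) (A : Matrix (Fin N) (Fin N) ℝ) :
    (matFun f A).IsHermitian := by
  by_cases hA : A.IsHermitian
  · rw [matFun_eq_cfc hA]
    exact cfc_predicate f A
  · rw [matFun, dif_neg hA]
    exact isHermitian_zero

theorem Matrix.IsHermitian.sortedEigs_matExp {A : Matrix (Fin N) (Fin N) ℝ}
    (hA : A.IsHermitian) : sortedEigs (matExp A) = Real.exp ∘ sortedEigs A := by
  rw [matExp, matFun_eq_cfc hA, hA.sortedEigs_cfc (Real.exp_monotone.monotoneOn _)]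

theorem Matrix.PosDef.sortedEigs_pos {A : Matrix (Fin N) (Fin N) ℝ} (hA : A.PosDef)
    (i : Fin N) : 0 < sortedEigs A i := by
  obtain ⟨σ, hσ⟩ := hA.isHermitian.exists_perm_sortedEigs
  rw [hσ]
  exact hA.eigenvalues_pos _

theorem Matrix.PosDef.sortedEigs_matLog {A : Matrix (Fin N) (Fin N) ℝ} (hA : A.PosDef) :
    sortedEigs (matLog A) = Real.log ∘ sortedEigs A := by
  rw [matLog, matFun_eq_cfc hA.isHermitian]
  exact hA.isHermitian.sortedEigs_cfc
    (Real.strictMonoOn_log.monotoneOn.mono (Set.range_subset_iff.mpr hA.sortedEigs_pos))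

end

/-- for `A_1, …, A_m ∈ P_n`,
`λ(exp((1/m) ∑_j log A_j)) ≺_log` the entrywise geometric mean of the eigenvalue vectors:
for every `k ≤ n`, `∏_{i<k} λ_i(exp((1/m) ∑_j log A_j)) ≤ ∏_{i<k} ∏_j λ_i(A_j)^{1/m}`,
with equality for `k = n`. -/
theorem log_majorization_exp_mean_log
    (n m : ℕ) (A : Fin m → Matrix (Fin n) (Fin n) ℝ) (hA : ∀ j, (A j).PosDef) :
    (∀ k : ℕ, k ≤ n →
      ∏ i ∈ Finset.univ.filter (fun i : Fin n => i.val < k),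
          sortedEigs (matExp ((1 / (m : ℝ)) • ∑ j, matLog (A j))) i
        ≤ ∏ i ∈ Finset.univ.filter (fun i : Fin n => i.val < k),
            ∏ j, sortedEigs (A j) i ^ (1 / (m : ℝ))) ∧
    (∏ i : Fin n, sortedEigs (matExp ((1 / (m : ℝ)) • ∑ j, matLog (A j))) i
      = ∏ i : Fin n, ∏ j, sortedEigs (A j) i ^ (1 / (m : ℝ))) := by
  have hL : ∀ j, (matLog (A j)).IsHermitian := fun j => isHermitian_matFun _ _
  set X := (1 / (m : ℝ)) • ∑ j, matLog (A j)
  have hX_eq : X = ∑ j, (1 / (m : ℝ)) • matLog (A j) := Finset.smul_sum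
  have hX : X.IsHermitian :=
    IsHermitian.smul (isSelfAdjoint_sum _ fun j _ => hL j) (IsSelfAdjoint.all _)
  have hlhs : ∀ s : Finset (Fin n),
      ∏ i ∈ s, sortedEigs (matExp X) i = Real.exp (∑ i ∈ s, sortedEigs X i) := fun s => by
    rw [hX.sortedEigs_matExp, Real.exp_sum]
    rfl
  have hrhs : ∀ s : Finset (Fin n), ∏ i ∈ s, ∏ j, sortedEigs (A j) i ^ (1 / (m : ℝ))
      = Real.exp (∑ j, 1 / (m : ℝ) * ∑ i ∈ s, sortedEigs (matLog (A j)) i) := fun s => by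
    simp only [(hA _).sortedEigs_matLog, Function.comp_apply, Finset.mul_sum, Real.exp_sum]
    rw [Finset.prod_comm]
    refine Finset.prod_congr rfl fun j _ => Finset.prod_congr rfl fun i _ => ?_
    rw [Real.rpow_def_of_pos ((hA j).sortedEigs_pos i), mul_comm]
  refine ⟨fun k hk => ?_, ?_⟩
  · rw [hlhs, hrhs, Real.exp_le_exp, hX_eq]
    exact IsHermitian.sum_filter_lt_sortedEigs_sum_smul_le _
      (fun j _ => by positivity) (fun j _ => hL j) hk
  · rw [hlhs, hrhs, ← hX.trace_eq_sum_sortedEigs, hX_eq, trace_sum]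
    simp only [trace_smul, smul_eq_mul, (hL _).trace_eq_sum_sortedEigs]
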